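/- If G is a square-stable graph and v is a simplicial vertex of G, then v belongs to some maximum stable set of G². -/

import Mathlib

open SimpleGraph

/-- The square of a graph: vertices adjacent iff at distance 1 or 2 in `G`. -/
def SimpleGraph.sq {V : Type*} (G : SimpleGraph V) : SimpleGraph V where
  Adj u v := G.Adj u v ∨ (u ≠ v ∧ ∃ w, G.Adj u w ∧ G.Adj w v)
  symm := by
    constructor
    rintro u v (h | ⟨hne, w, h1, h2⟩)
    · exact Or.inl h.symm
    · exact Or.inr ⟨hne.symm, w, h2.symm, h1.symm⟩
  loopless := by
    constructor
    rintro u (h | ⟨hne, _⟩)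
    · exact G.irrefl h
    · exact hne rfl

/-- A stable (independent) set of vertices. -/
def SimpleGraph.IsStableSet {V : Type*} (G : SimpleGraph V) (s : Set V) : Prop :=
  s.Pairwise fun u v => ¬ G.Adj u v

/-- The stability (independence) number. -/
noncomputable def SimpleGraph.alpha {V : Type*} (G : SimpleGraph V) : ℕ :=
  sSup {n | ∃ s : Finset V, G.IsStableSet ↑s ∧ s.card = n}

/-- The matching number: maximum number of edges in a matching. -/
noncomputable def SimpleGraph.mu {V : Type*} (G : SimpleGraph V) : ℕ :=
  sSup {n | ∃ M : G.Subgraph, M.IsMatching ∧ M.edgeSet.ncard = n}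

/-- `s` is a maximum stable set. -/
def SimpleGraph.IsMaximumStable {V : Type*} (G : SimpleGraph V) (s : Finset V) : Prop :=
  G.IsStableSet ↑s ∧ s.card = G.alpha

/-- `s` is a maximal stable set. -/
def SimpleGraph.IsMaximalStable {V : Type*} (G : SimpleGraph V) (s : Finset V) : Prop :=
  G.IsStableSet ↑s ∧ ∀ v ∉ s, ¬ G.IsStableSet (insert v (↑s : Set V))

/-- `G` is square-stable if `α(G) = α(G²)`. -/
def SimpleGraph.SquareStable {V : Type*} (G : SimpleGraph V) : Prop :=
  G.alpha = G.sq.alpha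

/-- König-Egerváry graph: `α(G) + μ(G) = |V(G)|`. -/
def SimpleGraph.KonigEgervary {V : Type*} [Fintype V] (G : SimpleGraph V) : Prop :=
  G.alpha + G.mu = Fintype.card V

/-- A pendant vertex: a vertex of degree 1. -/
def SimpleGraph.Pendant {V : Type*} (G : SimpleGraph V) (v : V) : Prop :=
  (G.neighborSet v).ncard = 1

/-- `G` has a perfect matching consisting of pendant edges. -/
def SimpleGraph.HasPendantPerfectMatching {V : Type*} (G : SimpleGraph V) : Prop :=
  ∃ M : G.Subgraph, M.IsPerfectMatching ∧ ∀ e ∈ M.edgeSet, ∃ v ∈ e, G.Pendant v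

/-- A simplicial vertex: its neighborhood induces a clique. -/
def SimpleGraph.IsSimplicial {V : Type*} (G : SimpleGraph V) (v : V) : Prop :=
  G.IsClique (G.neighborSet v)

/-- `G` is well-covered: every maximal stable set is maximum. -/
def SimpleGraph.WellCovered {V : Type*} (G : SimpleGraph V) : Prop :=
  ∀ s : Finset V, G.IsMaximalStable s → s.card = G.alpha

/-- `G` is very well-covered: well-covered, no isolated vertices, `|V| = 2α`. -/
def SimpleGraph.VeryWellCovered {V : Type*} [Fintype V] (G : SimpleGraph V) : Prop :=
  G.WellCovered ∧ (∀ v : V, (G.neighborSet v).ncard ≠ 0) ∧ Fintype.card V = 2 * G.alpha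

/-!
Take a maximum stable set `S` of `G²` not containing `v`. By square-stability `S` is also a
maximum stable set of `G`, so `v` has a neighbour `u ∈ S`. Since `N(v)` is a clique, every
vertex within distance two of `v`, other than `u`, is within distance two of `u`; hence
exchanging `u` for `v` keeps `S` stable in `G²`, and of the same size.
-/

namespace SimpleGraph

variable {V : Type*} {G H : SimpleGraph V}

theorem le_sq (G : SimpleGraph V) : G ≤ G.sq := fun _ _ h => Or.inl h

theorem IsStableSet.anti {s : Set V} (hGH : G ≤ H) (hs : H.IsStableSet s) :
    G.IsStableSet s :=
  hs.mono' fun _ _ hH hG => hH (hGH hG)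

theorem IsStableSet.insert {s : Set V} {v : V} (hs : G.IsStableSet s)
    (hv : ∀ w ∈ s, ¬ G.Adj v w) : G.IsStableSet (insert v s) :=
  Set.Pairwise.insert hs fun w hw _ => ⟨hv w hw, fun h => hv w hw h.symm⟩

theorem bddAbove_stableSet_card [Fintype V] (G : SimpleGraph V) :
    BddAbove {n | ∃ s : Finset V, G.IsStableSet ↑s ∧ s.card = n} := by
  refine ⟨Fintype.card V, ?_⟩
  rintro n ⟨s, -, rfl⟩
  exact s.card_le_univ

theorem IsStableSet.card_le_alpha [Fintype V] {s : Finset V} (hs : G.IsStableSet ↑s) :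
    s.card ≤ G.alpha :=
  le_csSup G.bddAbove_stableSet_card ⟨s, hs, rfl⟩

theorem exists_isMaximumStable [Fintype V] (G : SimpleGraph V) :
    ∃ s : Finset V, G.IsMaximumStable s :=
  Nat.sSup_mem (s := {n | ∃ s : Finset V, G.IsStableSet ↑s ∧ s.card = n})
    ⟨0, ∅, by simp [IsStableSet], rfl⟩ G.bddAbove_stableSet_card

theorem IsMaximumStable.of_sq {s : Finset V} (hss : G.SquareStable)
    (hs : G.sq.IsMaximumStable s) : G.IsMaximumStable s :=
  ⟨hs.1.anti G.le_sq, hs.2.trans hss.symm⟩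

theorem IsMaximumStable.exists_adj_of_notMem [Fintype V] [DecidableEq V] {s : Finset V}
    {v : V} (hs : G.IsMaximumStable s) (hv : v ∉ s) : ∃ u ∈ s, G.Adj v u := by
  by_contra! hno
  have hstable : G.IsStableSet ↑(insert v s) := by
    rw [Finset.coe_insert]
    exact hs.1.insert hno
  have hle := hstable.card_le_alpha
  rw [Finset.card_insert_of_notMem hv, hs.2] at hle
  omega

theorem IsSimplicial.sq_adj_of_sq_adj {v u w : V} (hv : G.IsSimplicial v) (hvu : G.Adj v u)
    (hvw : G.sq.Adj v w) (hwu : w ≠ u) : G.sq.Adj u w := by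
  rcases hvw with hvw | ⟨-, x, hvx, hxw⟩
  · exact Or.inl (hv hvu hvw hwu.symm)
  · by_cases hxu : x = u
    · exact Or.inl (hxu ▸ hxw)
    · exact Or.inr ⟨hwu.symm, x, hv hvu hvx (Ne.symm hxu), hxw⟩

theorem IsMaximumStable.insert_erase [DecidableEq V] {s : Finset V} {u v : V}
    (hs : G.IsMaximumStable s) (hu : u ∈ s) (hv : v ∉ s)
    (hvu : ∀ w ∈ s, w ≠ u → G.Adj v w → G.Adj u w) :
    G.IsMaximumStable (insert v (s.erase u)) := by
  refine ⟨?_, ?_⟩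
  · rw [Finset.coe_insert]
    have hsub : G.IsStableSet ↑(s.erase u) :=
      Set.Pairwise.mono (Finset.coe_subset.2 (s.erase_subset u)) hs.1
    refine hsub.insert fun w hw hvw => ?_
    obtain ⟨hwu, hws⟩ := Finset.mem_erase.1 hw
    exact hs.1 hu hws hwu.symm (hvu w hws hwu hvw)
  · rw [Finset.card_insert_of_notMem fun h => hv (Finset.mem_of_mem_erase h),
      Finset.card_erase_add_one hu, hs.2]

end SimpleGraph

theorem stmt7_general {V : Type*} [Fintype V] (G : SimpleGraph V)
    (hss : G.SquareStable) (v : V) (h : G.IsSimplicial v) :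
    ∃ s : Finset V, G.sq.IsMaximumStable s ∧ v ∈ s := by
  classical
  obtain ⟨S, hS⟩ := G.sq.exists_isMaximumStable
  by_cases hvS : v ∈ S
  · exact ⟨S, hS, hvS⟩
  obtain ⟨u, huS, hvu⟩ := (hS.of_sq hss).exists_adj_of_notMem hvS
  exact ⟨_, hS.insert_erase huS hvS fun w _ hwu hvw => h.sq_adj_of_sq_adj hvu hvw hwu,
    Finset.mem_insert_self _ _⟩

theorem stmt7 {V : Type*} [Fintype V] (G : SimpleGraph V) (hc : G.Connected)
    (hss : G.SquareStable) (v : V) (h : G.IsSimplicial v) :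
    ∃ s : Finset V, G.sq.IsMaximumStable s ∧ v ∈ s :=
  stmt7_general G hss v h
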